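/- Let M ∈ ℕ, β ∈ (0,1), and e : Fin M → ℕ → ℝ with each sequence e j converging to 0. Let j* : ℕ → Fin M be arbitrary, and define x : ℕ → ℝ by x (k+1) = e (j* (k+1)) (k+1) + β · x k. Then x k → 0. -/

import Mathlib

/-!
Taking norms, `‖x (k+1)‖ ≤ ‖e (j* (k+1)) (k+1)‖ + β ‖x k‖`. Since there are finitely many
models, the switched forcing term `k ↦ e (j* k) k` tends to zero whatever the switching is, and a
nonnegative sequence obeying such a contracting recursion with vanishing forcing tends to zero.
-/

open Filter Topology

theorem Filter.Tendsto.apply_of_finite {ι α X : Type*} [Finite ι] [TopologicalSpace X]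
    {l : Filter α} {e : ι → α → X} {a : X} (he : ∀ i, Tendsto (e i) l (𝓝 a)) (σ : α → ι) :
    Tendsto (fun k => e (σ k) k) l (𝓝 a) := fun _ hs =>
  (eventually_all.2 fun i => he i hs).mono fun k hk => hk (σ k)

theorem le_pow_mul_sub_add_of_le_affine {a : ℕ → ℝ} {r c : ℝ} {N : ℕ} (hr : 0 ≤ r)
    (ha : ∀ k ≥ N, a (k + 1) ≤ (1 - r) * c + r * a k) (m : ℕ) :
    a (m + N) ≤ r ^ m * (a N - c) + c := by
  induction m with
  | zero => simp
  | succ m ih =>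
    calc a (m + 1 + N) = a (m + N + 1) := by rw [Nat.add_right_comm]
      _ ≤ (1 - r) * c + r * a (m + N) := ha (m + N) (Nat.le_add_left N m)
      _ ≤ (1 - r) * c + r * (r ^ m * (a N - c) + c) := by gcongr
      _ = r ^ (m + 1) * (a N - c) + c := by ring

theorem tendsto_zero_of_le_add_mul {a b : ℕ → ℝ} {r : ℝ} (hr₀ : 0 ≤ r) (hr₁ : r < 1)
    (ha₀ : ∀ k, 0 ≤ a k) (hb : Tendsto b atTop (𝓝 0)) (ha : ∀ k, a (k + 1) ≤ b k + r * a k) :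
    Tendsto a atTop (𝓝 0) := by
  refine tendsto_order.2 ⟨fun ε hε => .of_forall fun k => hε.trans_le (ha₀ k), fun ε hε => ?_⟩
  -- Once `b ≤ (1 - r) * (ε / 2)`, the excess `a - ε / 2` is dominated by a geometric sequence.
  obtain ⟨N, hN⟩ := eventually_atTop.1 <|
    (tendsto_order.1 hb).2 ((1 - r) * (ε / 2)) (by nlinarith)
  have hgeom : Tendsto (fun m => r ^ m * (a N - ε / 2) + ε / 2) atTop (𝓝 (ε / 2)) := by
    simpa using ((tendsto_pow_atTop_nhds_zero_of_lt_one hr₀ hr₁).mul_const (a N - ε / 2)).add_const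
      (ε / 2)
  have hm : ∀ᶠ m in atTop, a (m + N) < ε :=
    (hgeom.eventually (gt_mem_nhds (by linarith))).mono fun m hm =>
      (le_pow_mul_sub_add_of_le_affine hr₀
        (fun k hk => by linarith [ha k, (hN k hk).le]) m).trans_lt hm
  exact tendsto_principal.1 <|
    (tendsto_add_atTop_iff_nat (l := 𝓟 (Set.Iio ε)) N).1 (tendsto_principal.2 hm)

theorem tendsto_zero_of_eq_add_smul {𝕜 E : Type*} [NormedField 𝕜] [SeminormedAddCommGroup E]
    [NormedSpace 𝕜 E] {x u : ℕ → E} {β : 𝕜} (hβ : ‖β‖ < 1) (hu : Tendsto u atTop (𝓝 0))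
    (hx : ∀ k, x (k + 1) = u (k + 1) + β • x k) : Tendsto x atTop (𝓝 0) := by
  refine tendsto_zero_iff_norm_tendsto_zero.2 <| tendsto_zero_of_le_add_mul (norm_nonneg β) hβ
    (fun k => norm_nonneg (x k)) (b := fun k => ‖u (k + 1)‖) ?_ fun k => ?_
  · simpa using ((tendsto_add_atTop_iff_nat 1).2 hu).norm
  · simpa [hx k, norm_smul] using norm_add_le (u (k + 1)) (β • x k)

theorem stmt_13 (M : ℕ) (β : ℝ) (hβ : β ∈ Set.Ioo (0 : ℝ) 1)
    (e : Fin M → ℕ → ℝ)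
    (he : ∀ j, Filter.Tendsto (e j) Filter.atTop (nhds 0))
    (jstar : ℕ → Fin M) (x : ℕ → ℝ)
    (hx : ∀ k, x (k + 1) = e (jstar (k + 1)) (k + 1) + β * x k) :
    Filter.Tendsto x Filter.atTop (nhds 0) := by
  have hβ' : ‖β‖ < 1 := by rw [Real.norm_of_nonneg hβ.1.le]; exact hβ.2
  exact tendsto_zero_of_eq_add_smul hβ' (Tendsto.apply_of_finite he jstar) hx
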